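/- arXiv:math/0506491 — 2 statements merged into one kernel-verified Lean document; each statement's English description precedes it below -/
import Mathlib

section
/- Let H = (H^A ⊗ H^B) ⊕ K be a fixed decomposition of a finite-dimensional Hilbert space, let E = {E_a} and R = {R_b} be quantum operations on B(H) with the indicated Kraus operators, and suppose there are scalars μ_{abkl} such that P_k R_b E_a P_l = μ_{abkl} P_kl for all a, b, k, l, and that the subspace H^A ⊗ H^B is invariant for every operator R_b E_a. Then for all a, a', l, l' one has P_l E_a† E_{a'} P_{l'} = (Σ_{b,k} conj(μ_{abkl}) μ_{a'bkl'}) P_{ll'}. -/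
open scoped Kronecker Matrix

noncomputable section

abbrev HIdx (m n p : ℕ) : Type := (Fin m × Fin n) ⊕ Fin p

def embed {m n p : ℕ} (M : Matrix (Fin m × Fin n) (Fin m × Fin n) ℂ) :
    Matrix (HIdx m n p) (HIdx m n p) ℂ :=
  Matrix.fromBlocks M 0 0 0

def PA (m n p : ℕ) : Matrix (HIdx m n p) (HIdx m n p) ℂ :=
  embed 1

def Pmu {m : ℕ} (n p : ℕ) (k l : Fin m) : Matrix (HIdx m n p) (HIdx m n p) ℂ :=
  embed (Matrix.single k l (1 : ℂ) ⊗ₖ (1 : Matrix (Fin n) (Fin n) ℂ))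

def trA {m n p : ℕ} (M : Matrix (HIdx m n p) (HIdx m n p) ℂ) :
    Matrix (Fin n) (Fin n) ℂ :=
  Matrix.of fun i j => ∑ k : Fin m, M (Sum.inl (k, i)) (Sum.inl (k, j))

def IsQuantumOperation {d : Type} [Fintype d] [DecidableEq d]
    (E : Matrix d d ℂ →ₗ[ℂ] Matrix d d ℂ) : Prop :=
  ∃ (ι : Type) (_ : Fintype ι) (K : ι → Matrix d d ℂ),
    (∀ ρ, E ρ = ∑ a, K a * ρ * (K a)ᴴ) ∧ ∑ a, (K a)ᴴ * K a = 1

/- Invariance of `H^A ⊗ H^B` under `R_b E_a` lets `P_𝔄 = Σ_k P_k` be inserted on the left of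
`R_b E_a P_l`, so the hypothesis on `μ` gives `R_b E_a P_l = Σ_k μ_{abkl} P_{kl}`. Inserting
`Σ_b R_b† R_b = 1` between `E_a†` and `E_{a'}` writes `P_l E_a† E_{a'} P_{l'}` as
`Σ_b (R_b E_a P_l)† (R_b E_{a'} P_{l'})`, and `P_{lk} P_{kl'} = P_{ll'}` finishes the computation. -/

lemma star_mul_eq_sum_star_mul_of_sum_star_mul_self_eq_one {A κ : Type*} [Semiring A] [StarRing A]
    [Fintype κ] (r : κ → A) (hr : ∑ b, star (r b) * r b = 1) (x y : A) :
    star x * y = ∑ b, star (r b * x) * (r b * y) := by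
  calc star x * y = star x * (∑ b, star (r b) * r b) * y := by rw [hr, mul_one]
    _ = ∑ b, star (r b * x) * (r b * y) := by
      simp only [Finset.mul_sum, Finset.sum_mul, star_mul, mul_assoc]

section MatrixUnits

variable {m n p : ℕ}

lemma embed_add (M N : Matrix (Fin m × Fin n) (Fin m × Fin n) ℂ) :
    (embed (M + N) : Matrix (HIdx m n p) (HIdx m n p) ℂ) = embed M + embed N := by
  simp [embed, Matrix.fromBlocks_add]

lemma embed_sum {σ : Type*} (s : Finset σ)
    (M : σ → Matrix (Fin m × Fin n) (Fin m × Fin n) ℂ) :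
    (embed (∑ i ∈ s, M i) : Matrix (HIdx m n p) (HIdx m n p) ℂ) = ∑ i ∈ s, embed (M i) :=
  map_sum (AddMonoidHom.mk' embed embed_add) M s

lemma embed_mul (M N : Matrix (Fin m × Fin n) (Fin m × Fin n) ℂ) :
    (embed M * embed N : Matrix (HIdx m n p) (HIdx m n p) ℂ) = embed (M * N) := by
  simp [embed, Matrix.fromBlocks_multiply]

lemma embed_conjTranspose (M : Matrix (Fin m × Fin n) (Fin m × Fin n) ℂ) :
    (embed M : Matrix (HIdx m n p) (HIdx m n p) ℂ)ᴴ = embed Mᴴ := by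
  simp [embed, Matrix.fromBlocks_conjTranspose]

lemma Pmu_conjTranspose (k l : Fin m) :
    (Pmu n p k l)ᴴ = Pmu n p l k := by
  simp [Pmu, embed_conjTranspose, Matrix.conjTranspose_kronecker]

lemma Pmu_mul_Pmu (k l k' l' : Fin m) :
    Pmu n p k l * Pmu n p k' l' = if l = k' then Pmu n p k l' else 0 := by
  rw [Pmu, Pmu, embed_mul, ← Matrix.mul_kronecker_mul, one_mul]
  split_ifs with h
  · rw [h, Matrix.single_mul_single_same, one_mul, Pmu]
  · rw [Matrix.single_mul_single_of_ne (h := h), Matrix.zero_kronecker]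
    simp [embed]

lemma PA_eq_sum_Pmu : PA m n p = ∑ k : Fin m, Pmu n p k k := by
  have h := map_sum (AddMonoidHom.mk' (· ⊗ₖ (1 : Matrix (Fin n) (Fin n) ℂ))
    fun A B => Matrix.add_kronecker A B 1) (fun k : Fin m => Matrix.single k k (1 : ℂ)) .univ
  simp only [AddMonoidHom.mk'_apply, Matrix.sum_single_one] at h
  rw [PA, ← Matrix.one_kronecker_one, h, embed_sum]
  rfl

lemma PA_mul_Pmu (k l : Fin m) :
    PA m n p * Pmu n p k l = Pmu n p k l := by
  rw [PA, Pmu, embed_mul, one_mul]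

lemma mul_Pmu_eq_sum_smul_Pmu {T : Matrix (HIdx m n p) (HIdx m n p) ℂ}
    {ν : Fin m → ℂ} {l : Fin m} (hν : ∀ k, Pmu n p k k * T * Pmu n p l l = ν k • Pmu n p k l)
    (hT : T * PA m n p = PA m n p * T * PA m n p) :
    T * Pmu n p l l = ∑ k, ν k • Pmu n p k l := by
  calc T * Pmu n p l l = T * PA m n p * Pmu n p l l := by rw [mul_assoc, PA_mul_Pmu]
    _ = PA m n p * T * Pmu n p l l := by rw [hT, mul_assoc _ (PA m n p), PA_mul_Pmu]
    _ = ∑ k, ν k • Pmu n p k l := by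
      simp only [PA_eq_sum_Pmu, Finset.sum_mul, hν]

lemma conjTranspose_sum_smul_Pmu_mul_sum_smul_Pmu (ν ν' : Fin m → ℂ) (l l' : Fin m) :
    (∑ k, ν k • Pmu n p k l)ᴴ * ∑ k, ν' k • Pmu n p k l' =
      (∑ k, star (ν k) * ν' k) • Pmu n p l l' := by
  simp only [Matrix.conjTranspose_sum, Matrix.conjTranspose_smul, Pmu_conjTranspose,
    Finset.sum_mul, Finset.mul_sum, Matrix.smul_mul, Matrix.mul_smul, Pmu_mul_Pmu, smul_ite,
    smul_zero, Finset.sum_ite_eq', Finset.mem_univ, if_true, smul_smul, Finset.sum_smul, mul_comm]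

end MatrixUnits

theorem necessity_computation_general {m n p : ℕ} {ι κ : Type} [Fintype ι] [Fintype κ]
    (E : ι → Matrix (HIdx m n p) (HIdx m n p) ℂ)
    (R : κ → Matrix (HIdx m n p) (HIdx m n p) ℂ)
    (hRTP : ∑ b, (R b)ᴴ * R b = 1)
    (μ : ι → κ → Fin m → Fin m → ℂ)
    (hμ : ∀ a b k l, Pmu n p k k * (R b * E a) * Pmu n p l l = μ a b k l • Pmu n p k l)
    (hinv : ∀ a b, (R b * E a) * PA m n p = PA m n p * (R b * E a) * PA m n p) :
    ∀ a a' l l',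
      Pmu n p l l * (E a)ᴴ * E a' * Pmu n p l' l' =
        (∑ b, ∑ k, (starRingEnd ℂ) (μ a b k l) * μ a' b k l') • Pmu n p l l' := by
  intro a a' l l'
  have hcolumn : ∀ a b l, R b * (E a * Pmu n p l l) = ∑ k, μ a b k l • Pmu n p k l :=
    fun a b l => by rw [← mul_assoc, mul_Pmu_eq_sum_smul_Pmu (hμ a b · l) (hinv a b)]
  calc Pmu n p l l * (E a)ᴴ * E a' * Pmu n p l' l'
      = (E a * Pmu n p l l)ᴴ * (E a' * Pmu n p l' l') := by
        simp only [Matrix.conjTranspose_mul, Pmu_conjTranspose, mul_assoc]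
    _ = ∑ b, (R b * (E a * Pmu n p l l))ᴴ * (R b * (E a' * Pmu n p l' l')) := by
        simpa only [Matrix.star_eq_conjTranspose] using
          star_mul_eq_sum_star_mul_of_sum_star_mul_self_eq_one R hRTP _ _
    _ = _ := by
        simp only [hcolumn, conjTranspose_sum_smul_Pmu_mul_sum_smul_Pmu, starRingEnd_apply,
          Finset.sum_smul]

/-- If `P_k R_b E_a P_l = μ_{abkl} P_{kl}` and `H^A ⊗ H^B` is invariant for each `R_b E_a`,
then `P_l E_a† E_{a'} P_{l'} = (Σ_{b,k} conj(μ_{abkl}) μ_{a'bkl'}) P_{ll'}`. -/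
theorem necessity_computation {m n p : ℕ} {ι κ : Type} [Fintype ι] [Fintype κ]
    (Eop Rop : Matrix (HIdx m n p) (HIdx m n p) ℂ →ₗ[ℂ] Matrix (HIdx m n p) (HIdx m n p) ℂ)
    (E : ι → Matrix (HIdx m n p) (HIdx m n p) ℂ)
    (R : κ → Matrix (HIdx m n p) (HIdx m n p) ℂ)
    (hEKraus : ∀ ρ, Eop ρ = ∑ a, E a * ρ * (E a)ᴴ)
    (hETP : ∑ a, (E a)ᴴ * E a = 1)
    (hRKraus : ∀ ρ, Rop ρ = ∑ b, R b * ρ * (R b)ᴴ)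
    (hRTP : ∑ b, (R b)ᴴ * R b = 1)
    (μ : ι → κ → Fin m → Fin m → ℂ)
    (hμ : ∀ a b k l, Pmu n p k k * (R b * E a) * Pmu n p l l = μ a b k l • Pmu n p k l)
    (hinv : ∀ a b, (R b * E a) * PA m n p = PA m n p * (R b * E a) * PA m n p) :
    ∀ a a' l l',
      Pmu n p l l * (E a)ᴴ * E a' * Pmu n p l' l' =
        (∑ b, ∑ k, (starRingEnd ℂ) (μ a b k l) * μ a' b k l') • Pmu n p l l' :=
  necessity_computation_general E R hRTP μ hμ hinv
end
end

section
/- Let H = (H^A ⊗ H^B) ⊕ K with dim H^A = m, let E = {E_a} be a quantum operation on B(H), and for each a, k define E_{a,k} : H^B → H by E_{a,k}(ξ) = E_a P_𝔄 (α_k ⊗ ξ), and let E_B : B(H^B) → B(H) be the completely positive map E_B(ρ^B) = (1/m) Σ_{a,k} E_{a,k} ρ^B E_{a,k}†. Suppose R : B(H) → B(H^B) is a quantum operation with (R ∘ E_B)(ρ^B) = ρ^B for all ρ^B ∈ B(H^B). Then (R ∘ E)(1^A ⊗ ρ^B) = m ρ^B for all ρ^B ∈ B(H^B); consequently, with the ampliation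 I_𝔄 : B(H^B) → B(H), I_𝔄(ρ^B) = (1/m)(1^A ⊗ ρ^B), the map R' = I_𝔄 ∘ R satisfies (R' ∘ E)(1^A ⊗ ρ^B) = 1^A ⊗ ρ^B for all ρ^B ∈ B(H^B). -/
open scoped Kronecker Matrix

noncomputable section

/-- The isometry `|α_k⟩ : H^B → H`, `ξ ↦ α_k ⊗ ξ ∈ H^A ⊗ H^B ⊆ H`, as a matrix. -/
def ket {m : ℕ} (n p : ℕ) (k : Fin m) : Matrix (HIdx m n p) (Fin n) ℂ :=
  Matrix.of fun x j =>
    match x with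
    | Sum.inl (k', i) => if k' = k ∧ i = j then 1 else 0
    | Sum.inr _ => 0

/-- Quantum operation from `B(d₁)` to `B(d₂)`: Kraus representation with `Σ K†K = 1`. -/
def IsQuantumOperationHom {d₁ d₂ : Type} [Fintype d₁] [DecidableEq d₁]
    [Fintype d₂] [DecidableEq d₂]
    (E : Matrix d₁ d₁ ℂ →ₗ[ℂ] Matrix d₂ d₂ ℂ) : Prop :=
  ∃ (ι : Type) (_ : Fintype ι) (K : ι → Matrix d₂ d₁ ℂ),
    (∀ ρ, E ρ = ∑ i, K i * ρ * (K i)ᴴ) ∧ ∑ i, (K i)ᴴ * K i = 1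

/-!
Since `P_𝔄` fixes the range of each `|α_k⟩` and `Σ_k |α_k⟩ ρ ⟨α_k| = 1^A ⊗ ρ`, the averaged map is
`E_B(ρ) = (1/m) E(1^A ⊗ ρ)`. Linearity of `R` turns `R ∘ E_B = id` into `R(E(1^A ⊗ ρ)) = m ρ`, and
the ampliation `I_𝔄` then cancels the factor `m`.
-/

lemma PA_mul_ket {m n p : ℕ} (k : Fin m) : PA m n p * ket n p k = ket n p k := by
  ext (⟨k', i⟩ | q) j
  · simp [PA, embed, ket, Matrix.mul_apply, Fintype.sum_sum_type, Matrix.one_apply,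
      Fintype.sum_prod_type, ite_and]
  · simp [PA, embed, ket, Matrix.mul_apply, Fintype.sum_sum_type]

lemma sum_ket_mul_mul_conjTranspose {m n p : ℕ} (ρ : Matrix (Fin n) (Fin n) ℂ) :
    ∑ k : Fin m, ket n p k * ρ * (ket n p k)ᴴ = embed (1 ⊗ₖ ρ) := by
  ext (⟨k₁, i⟩ | q) (⟨k₂, j⟩ | r) <;>
    simp [embed, ket, Matrix.mul_apply, Matrix.sum_apply, Matrix.one_apply, ite_and,
      apply_ite (starRingEnd ℂ), eq_comm]

lemma embed_smul {m n p : ℕ} (c : ℂ) (M : Matrix (Fin m × Fin n) (Fin m × Fin n) ℂ) :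
    embed (p := p) (c • M) = c • embed M := by
  simp [embed, Matrix.fromBlocks_smul]

lemma sum_kraus_PA_ket_eq_sum_kraus_embed {m n p : ℕ} {ι : Type} [Fintype ι]
    (E : ι → Matrix (HIdx m n p) (HIdx m n p) ℂ) (ρ : Matrix (Fin n) (Fin n) ℂ) :
    ∑ a, ∑ k : Fin m, (E a * PA m n p * ket n p k) * ρ * (E a * PA m n p * ket n p k)ᴴ =
      ∑ a, E a * embed (1 ⊗ₖ ρ) * (E a)ᴴ := by
  simp_rw [Matrix.mul_assoc (E _) (PA m n p), PA_mul_ket, ← sum_ket_mul_mul_conjTranspose,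
    Matrix.mul_sum, Matrix.sum_mul, Matrix.conjTranspose_mul, Matrix.mul_assoc]

theorem recovery_from_averaged_map_general {m n p : ℕ} {ι : Type} [Fintype ι]
    (Eop : Matrix (HIdx m n p) (HIdx m n p) ℂ →ₗ[ℂ] Matrix (HIdx m n p) (HIdx m n p) ℂ)
    (E : ι → Matrix (HIdx m n p) (HIdx m n p) ℂ)
    (hKraus : ∀ ρ, Eop ρ = ∑ a, E a * ρ * (E a)ᴴ)
    (R : Matrix (HIdx m n p) (HIdx m n p) ℂ →ₗ[ℂ] Matrix (Fin n) (Fin n) ℂ)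
    (hRcorr : ∀ ρB : Matrix (Fin n) (Fin n) ℂ,
      R ((1 / (m : ℂ)) • ∑ a : ι, ∑ k : Fin m,
        (E a * PA m n p * ket n p k) * ρB * (E a * PA m n p * ket n p k)ᴴ) = ρB) :
    (∀ ρB : Matrix (Fin n) (Fin n) ℂ,
      R (Eop (embed ((1 : Matrix (Fin m) (Fin m) ℂ) ⊗ₖ ρB))) = (m : ℂ) • ρB) ∧
    (∀ ρB : Matrix (Fin n) (Fin n) ℂ,
      (1 / (m : ℂ)) • embed (p := p) ((1 : Matrix (Fin m) (Fin m) ℂ) ⊗ₖ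
          R (Eop (embed ((1 : Matrix (Fin m) (Fin m) ℂ) ⊗ₖ ρB)))) =
        embed ((1 : Matrix (Fin m) (Fin m) ℂ) ⊗ₖ ρB)) := by
  simp_rw [sum_kraus_PA_ket_eq_sum_kraus_embed, ← hKraus] at hRcorr
  -- For `m = 0` the factor `1 / m` is the junk value `0`, so `hRcorr` forces every `ρB` to vanish.
  rcases eq_or_ne (m : ℂ) 0 with hm | hm
  · have hzero : ∀ ρB : Matrix (Fin n) (Fin n) ℂ, ρB = 0 := fun ρB => by
      simpa [hm] using (hRcorr ρB).symm
    exact ⟨fun ρB => by simp [hzero ρB, embed], fun ρB => by simp [hzero ρB, embed]⟩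
  have hrecover : ∀ ρB : Matrix (Fin n) (Fin n) ℂ,
      R (Eop (embed ((1 : Matrix (Fin m) (Fin m) ℂ) ⊗ₖ ρB))) = (m : ℂ) • ρB := fun ρB =>
    calc R (Eop (embed (1 ⊗ₖ ρB)))
        = (m : ℂ) • R ((1 / (m : ℂ)) • Eop (embed (1 ⊗ₖ ρB))) := by
          rw [map_smul, smul_smul, mul_one_div_cancel hm, one_smul]
      _ = (m : ℂ) • ρB := by rw [hRcorr]
  refine ⟨hrecover, fun ρB => ?_⟩
  rw [hrecover, Matrix.kronecker_smul, embed_smul, smul_smul, one_div_mul_cancel hm, one_smul]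

/-- If `R : B(H) → B(H^B)` corrects the averaged map
`E_B(ρ^B) = (1/m) Σ_{a,k} E_{a,k} ρ^B E_{a,k}†`, then `(R ∘ E)(1^A ⊗ ρ^B) = m ρ^B`, and
`R' = I_𝔄 ∘ R` with the ampliation `I_𝔄(ρ^B) = (1/m)(1^A ⊗ ρ^B)` satisfies
`(R' ∘ E)(1^A ⊗ ρ^B) = 1^A ⊗ ρ^B`. -/
theorem recovery_from_averaged_map {m n p : ℕ} {ι : Type} [Fintype ι]
    (Eop : Matrix (HIdx m n p) (HIdx m n p) ℂ →ₗ[ℂ] Matrix (HIdx m n p) (HIdx m n p) ℂ)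
    (E : ι → Matrix (HIdx m n p) (HIdx m n p) ℂ)
    (hKraus : ∀ ρ, Eop ρ = ∑ a, E a * ρ * (E a)ᴴ)
    (hTP : ∑ a, (E a)ᴴ * E a = 1)
    (R : Matrix (HIdx m n p) (HIdx m n p) ℂ →ₗ[ℂ] Matrix (Fin n) (Fin n) ℂ)
    (hR : IsQuantumOperationHom R)
    (hRcorr : ∀ ρB : Matrix (Fin n) (Fin n) ℂ,
      R ((1 / (m : ℂ)) • ∑ a : ι, ∑ k : Fin m,
        (E a * PA m n p * ket n p k) * ρB * (E a * PA m n p * ket n p k)ᴴ) = ρB) :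
    (∀ ρB : Matrix (Fin n) (Fin n) ℂ,
      R (Eop (embed ((1 : Matrix (Fin m) (Fin m) ℂ) ⊗ₖ ρB))) = (m : ℂ) • ρB) ∧
    (∀ ρB : Matrix (Fin n) (Fin n) ℂ,
      (1 / (m : ℂ)) • embed (p := p) ((1 : Matrix (Fin m) (Fin m) ℂ) ⊗ₖ
          R (Eop (embed ((1 : Matrix (Fin m) (Fin m) ℂ) ⊗ₖ ρB)))) =
        embed ((1 : Matrix (Fin m) (Fin m) ℂ) ⊗ₖ ρB)) :=
  recovery_from_averaged_map_general Eop E hKraus R hRcorr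
end
end
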